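/- arXiv:math/0006123 — 4 statements merged into one kernel-verified Lean document; each statement's English description precedes it below -/
import Mathlib

section
/- Let k be a commutative ℚ-algebra, let A = ⊕_{n∈ℤ} A_n be a ℤ-graded commutative k-algebra, and let Δ : A → A be a k-linear map of degree -1 with Δ² = 0 such that the bracket [·•·]_Δ satisfies the odd Leibniz rule [a•(b ∧ c)]_Δ = [a•b]_Δ ∧ c + (-1)^{(|a|-1)|b|} b ∧ [a•c]_Δ for all homogeneous a, b, c. Then [·•·]_Δ satisfies the graded Jacobi identity: for all homogeneous a, b, c ∈ A, [a•[b•c]_Δ]_Δ = [[a•b]_Δ•c]_Δ + (-1)^{(|a|-1)(|b|-1)} [b•[a•c]_Δ]_Δ. (In other words, a Gerstenhaber–Batalin–Vilkovisky algebra is a Gerstenhaber algebra.) -/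
/-- The Gerstenhaber–Batalin–Vilkovisky bracket associated to an operator `Δ`
on a graded algebra, defined on a homogeneous element `a` of degree `m` by
`[a • b]_Δ = (-1)^m (Δ(a ∧ b) - (Δ a) ∧ b - (-1)^m a ∧ Δ b)`. -/
def gbvBracket {k A : Type*} [CommRing k] [Ring A] [Algebra k A]
    (Δ : A →ₗ[k] A) (m : ℤ) (a b : A) : A :=
  (Int.negOnePow m : ℤ) • (Δ (a * b) - Δ a * b - (Int.negOnePow m : ℤ) • (a * Δ b))

/-!
Write `ε q = (-1)^q`. The bracket measures how far `Δ` is from being a derivation: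
`Δ (x * y) = ε q • [x • y] + Δ x * y + ε q • (x * Δ y)`, and `Δ² = 0` makes `Δ` a derivation
of the bracket. Expanding `[b • c]` inside `[a • [b • c]]`, these two facts together with the
Leibniz rule for `a` on `b * c`, `Δ b * c`, `b * Δ c` and for `Δ a` on `b * c` rewrite the left
side in terms of `[[a • b] • c]` and `[b • [a • c]]`. What remains is a sign identity in
`ε m`, `ε n` and `ε (m * n)`, checked case by case.
-/

section
variable {k A : Type*} [CommRing k] [Ring A] [Algebra k A] (Δ : A →ₗ[k] A)

lemma gbvBracket_sub_right (q : ℤ) (x y z : A) :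
    gbvBracket Δ q x (y - z) = gbvBracket Δ q x y - gbvBracket Δ q x z := by
  simp only [gbvBracket, mul_sub, map_sub, smul_sub]
  abel

lemma gbvBracket_zsmul_right (q r : ℤ) (x y : A) :
    gbvBracket Δ q x (r • y) = r • gbvBracket Δ q x y := by
  simp only [gbvBracket, mul_smul_comm, map_zsmul, smul_sub, smul_comm r]

lemma gbvBracket_eq_sub (q : ℤ) (x y : A) :
    gbvBracket Δ q x y = (q.negOnePow : ℤ) • Δ (x * y)
      - (q.negOnePow : ℤ) • (Δ x * y) - x * Δ y := by
  rcases Int.units_eq_one_or q.negOnePow with h | h <;> simp only [gbvBracket, h] <;> module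

lemma map_mul_eq_gbvBracket (q : ℤ) (x y : A) :
    Δ (x * y) = (q.negOnePow : ℤ) • gbvBracket Δ q x y + Δ x * y
      + (q.negOnePow : ℤ) • (x * Δ y) := by
  rcases Int.units_eq_one_or q.negOnePow with h | h <;> simp only [gbvBracket, h] <;> module

variable {Δ}

lemma map_gbvBracket (hΔ2 : ∀ x, Δ (Δ x) = 0) (q : ℤ) (x y : A) :
    Δ (gbvBracket Δ q x y) = gbvBracket Δ (q - 1) (Δ x) y
      - (q.negOnePow : ℤ) • gbvBracket Δ q x (Δ y) := by
  rcases Int.units_eq_one_or q.negOnePow with h | h <;>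
    simp only [gbvBracket, Int.negOnePow_sub, Int.negOnePow_one, h, map_sub, map_zsmul, hΔ2,
      zero_mul, mul_zero, sub_zero, smul_zero, zero_sub] <;>
    module

lemma gbvBracket_map_right (hΔ2 : ∀ x, Δ (Δ x) = 0) (q : ℤ) (x y : A) :
    gbvBracket Δ q x (Δ y) = (q.negOnePow : ℤ) • gbvBracket Δ (q - 1) (Δ x) y
      - (q.negOnePow : ℤ) • Δ (gbvBracket Δ q x y) := by
  rw [map_gbvBracket hΔ2 q x y]
  rcases Int.units_eq_one_or q.negOnePow with h | h <;> rw [h] <;> module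

variable (Δ)

/-- The odd Leibniz rule for `[x • ·]_Δ` on `y * z`; `m` and `n` stand for the degrees of `x`, `y`. -/
def GbvLeibnizAt (m n : ℤ) (x y z : A) : Prop :=
  gbvBracket Δ m x (y * z)
    = gbvBracket Δ m x y * z + (((m - 1) * n).negOnePow : ℤ) • (y * gbvBracket Δ m x z)

variable {Δ}

theorem gbvBracket_jacobi_of_leibnizAt (hΔ2 : ∀ x, Δ (Δ x) = 0) {m n : ℤ} {a b c : A}
    (h₁ : GbvLeibnizAt Δ m n a b c) (h₂ : GbvLeibnizAt Δ (m - 1) n (Δ a) b c)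
    (h₃ : GbvLeibnizAt Δ m (n - 1) a (Δ b) c) (h₄ : GbvLeibnizAt Δ m n a b (Δ c)) :
    gbvBracket Δ m a (gbvBracket Δ n b c)
      = gbvBracket Δ (m + n - 1) (gbvBracket Δ m a b) c
        + (((m - 1) * (n - 1)).negOnePow : ℤ) • gbvBracket Δ n b (gbvBracket Δ m a c) := by
  rw [gbvBracket_eq_sub Δ n b c, gbvBracket_sub_right, gbvBracket_sub_right,
    gbvBracket_zsmul_right, gbvBracket_zsmul_right, gbvBracket_map_right hΔ2, h₂, h₁,
    map_add, map_zsmul, map_mul_eq_gbvBracket Δ (m + n - 1) (gbvBracket Δ m a b) c,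
    map_mul_eq_gbvBracket Δ n b (gbvBracket Δ m a c), map_gbvBracket hΔ2 m a b,
    map_gbvBracket hΔ2 m a c, h₃, h₄]
  simp only [sub_one_mul, mul_sub_one, Int.negOnePow_sub, Int.negOnePow_add, Int.negOnePow_one,
    Units.val_mul, Units.val_neg, Units.val_one]
  simp only [sub_mul, smul_mul_assoc, mul_sub, mul_smul_comm]
  rcases Int.units_eq_one_or m.negOnePow with hm | hm <;>
    rcases Int.units_eq_one_or n.negOnePow with hn | hn <;>
    rcases Int.units_eq_one_or (m * n).negOnePow with hmn | hmn <;>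
    simp only [hm, hn, hmn] <;> module

end

theorem gbvBracket_jacobi_general {k A : Type*} [CommRing k]
    [Ring A] [Algebra k A]
    (𝒜 : ℤ → Submodule k A)
    (Δ : A →ₗ[k] A)
    (hΔdeg : ∀ (n : ℤ) (a : A), a ∈ 𝒜 n → Δ a ∈ 𝒜 (n - 1))
    (hΔ2 : ∀ a : A, Δ (Δ a) = 0)
    (hLeib : ∀ (m n p : ℤ) (a b c : A), a ∈ 𝒜 m → b ∈ 𝒜 n → c ∈ 𝒜 p →
      gbvBracket Δ m a (b * c)
        = gbvBracket Δ m a b * c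
          + (Int.negOnePow ((m - 1) * n) : ℤ) • (b * gbvBracket Δ m a c))
    (m n p : ℤ) (a b c : A) (ha : a ∈ 𝒜 m) (hb : b ∈ 𝒜 n) (hc : c ∈ 𝒜 p) :
    gbvBracket Δ m a (gbvBracket Δ n b c)
      = gbvBracket Δ (m + n - 1) (gbvBracket Δ m a b) c
        + (Int.negOnePow ((m - 1) * (n - 1)) : ℤ) •
            gbvBracket Δ n b (gbvBracket Δ m a c) :=
  gbvBracket_jacobi_of_leibnizAt hΔ2 (hLeib m n p a b c ha hb hc)
    (hLeib (m - 1) n p (Δ a) b c (hΔdeg m a ha) hb hc)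
    (hLeib m (n - 1) p a (Δ b) c ha (hΔdeg n b hb) hc)
    (hLeib m n (p - 1) a b (Δ c) ha hb (hΔdeg p c hc))

/-- a GBV algebra is a Gerstenhaber algebra.  Let `k` be a
commutative ℚ-algebra, `A` a ℤ-graded commutative `k`-algebra, and `Δ` a
`k`-linear map of degree `-1` with `Δ² = 0` whose bracket satisfies the odd
Leibniz rule.  Then `[·•·]_Δ` satisfies the graded Jacobi identity:
`[a•[b•c]] = [[a•b]•c] + (-1)^{(|a|-1)(|b|-1)} [b•[a•c]]` for homogeneous
`a, b, c`. -/
theorem gbvBracket_jacobi {k A : Type*} [CommRing k] [Algebra ℚ k]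
    [Ring A] [Algebra k A]
    (𝒜 : ℤ → Submodule k A) [GradedAlgebra 𝒜]
    (hcomm : ∀ (m n : ℤ) (a b : A), a ∈ 𝒜 m → b ∈ 𝒜 n →
      a * b = (Int.negOnePow (m * n) : ℤ) • (b * a))
    (Δ : A →ₗ[k] A)
    (hΔdeg : ∀ (n : ℤ) (a : A), a ∈ 𝒜 n → Δ a ∈ 𝒜 (n - 1))
    (hΔ2 : ∀ a : A, Δ (Δ a) = 0)
    (hLeib : ∀ (m n p : ℤ) (a b c : A), a ∈ 𝒜 m → b ∈ 𝒜 n → c ∈ 𝒜 p →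
      gbvBracket Δ m a (b * c)
        = gbvBracket Δ m a b * c
          + (Int.negOnePow ((m - 1) * n) : ℤ) • (b * gbvBracket Δ m a c))
    (m n p : ℤ) (a b c : A) (ha : a ∈ 𝒜 m) (hb : b ∈ 𝒜 n) (hc : c ∈ 𝒜 p) :
    gbvBracket Δ m a (gbvBracket Δ n b c)
      = gbvBracket Δ (m + n - 1) (gbvBracket Δ m a b) c
        + (Int.negOnePow ((m - 1) * (n - 1)) : ℤ) •
            gbvBracket Δ n b (gbvBracket Δ m a c) :=
  gbvBracket_jacobi_general 𝒜 Δ hΔdeg hΔ2 hLeib m n p a b c ha hb hc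
end

section
/- Let k be a commutative ring, let A = ⊕_{n∈ℤ} A_n be a ℤ-graded commutative k-algebra, and let Δ : A → A be a k-linear map of degree -1 with Δ² = 0. Then Δ is a graded derivation of the bracket [·•·]_Δ: for all homogeneous a, b ∈ A, Δ[a•b]_Δ = [Δa•b]_Δ - (-1)^{|a|} [a•Δb]_Δ. -/
lemma negOnePow_smul_negOnePow_smul {M : Type*} [AddCommGroup M] (m : ℤ) (x : M) :
    (Int.negOnePow m : ℤ) • (Int.negOnePow m : ℤ) • x = x := by
  rw [smul_smul, Int.units_coe_mul_self, one_smul]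

section SquareZero

variable {k A : Type*} [CommRing k] [Ring A] [Algebra k A] {Δ : A →ₗ[k] A}

lemma map_gbvBracket_of_sq_eq_zero (hΔ2 : ∀ a : A, Δ (Δ a) = 0) (m : ℤ) (a b : A) :
    Δ (gbvBracket Δ m a b) = -((Int.negOnePow m : ℤ) • Δ (Δ a * b)) - Δ (a * Δ b) := by
  simp only [gbvBracket, map_zsmul, map_sub, hΔ2, smul_zero, smul_sub,
    negOnePow_smul_negOnePow_smul, zero_sub]

lemma gbvBracket_map_left_of_sq_eq_zero (hΔ2 : ∀ a : A, Δ (Δ a) = 0) (m : ℤ) (a b : A) :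
    gbvBracket Δ m (Δ a) b = (Int.negOnePow m : ℤ) • Δ (Δ a * b) - Δ a * Δ b := by
  simp only [gbvBracket, hΔ2, zero_mul, sub_zero, smul_sub, negOnePow_smul_negOnePow_smul]

lemma negOnePow_smul_gbvBracket_map_right_of_sq_eq_zero (hΔ2 : ∀ a : A, Δ (Δ a) = 0)
    (m : ℤ) (a b : A) :
    (Int.negOnePow m : ℤ) • gbvBracket Δ m a (Δ b) = Δ (a * Δ b) - Δ a * Δ b := by
  simp only [gbvBracket, hΔ2, mul_zero, smul_zero, sub_zero, negOnePow_smul_negOnePow_smul]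

end SquareZero

theorem delta_derivation_of_gbvBracket_general {k A : Type*} [CommRing k]
    [Ring A] [Algebra k A]
    (Δ : A →ₗ[k] A)
    (hΔ2 : ∀ a : A, Δ (Δ a) = 0)
    (m : ℤ) (a b : A) :
    Δ (gbvBracket Δ m a b)
      = gbvBracket Δ (m - 1) (Δ a) b
        - (Int.negOnePow m : ℤ) • gbvBracket Δ m a (Δ b) := by
  rw [map_gbvBracket_of_sq_eq_zero hΔ2, gbvBracket_map_left_of_sq_eq_zero hΔ2,
    negOnePow_smul_gbvBracket_map_right_of_sq_eq_zero hΔ2, Int.negOnePow_sub,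
    Int.negOnePow_one, mul_neg_one, Units.val_neg, neg_smul]
  abel

/-- if `A` is a ℤ-graded commutative `k`-algebra and `Δ` is a
`k`-linear map of degree `-1` with `Δ² = 0`, then `Δ` is a graded derivation of
the bracket `[·•·]_Δ`: for homogeneous `a, b`,
`Δ[a•b]_Δ = [Δa•b]_Δ - (-1)^{|a|} [a•Δb]_Δ`. -/
theorem delta_derivation_of_gbvBracket {k A : Type*} [CommRing k]
    [Ring A] [Algebra k A]
    (𝒜 : ℤ → Submodule k A) [GradedAlgebra 𝒜]
    (hcomm : ∀ (m n : ℤ) (a b : A), a ∈ 𝒜 m → b ∈ 𝒜 n →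
      a * b = (Int.negOnePow (m * n) : ℤ) • (b * a))
    (Δ : A →ₗ[k] A)
    (hΔdeg : ∀ (n : ℤ) (a : A), a ∈ 𝒜 n → Δ a ∈ 𝒜 (n - 1))
    (hΔ2 : ∀ a : A, Δ (Δ a) = 0)
    (m n : ℤ) (a b : A) (ha : a ∈ 𝒜 m) (hb : b ∈ 𝒜 n) :
    Δ (gbvBracket Δ m a b)
      = gbvBracket Δ (m - 1) (Δ a) b
        - (Int.negOnePow m : ℤ) • gbvBracket Δ m a (Δ b) :=
  delta_derivation_of_gbvBracket_general Δ hΔ2 m a b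
end

section
/- Let k be a commutative ring, let A = ⊕_{n∈ℤ} A_n be a ℤ-graded commutative k-algebra, let Δ : A → A be a k-linear map of degree -1, and let δ : A → A be a k-linear map of degree +1 which is a graded derivation of ∧ (δ(a ∧ b) = (δa) ∧ b + (-1)^{|a|} a ∧ δb) and satisfies δΔ + Δδ = 0. Then δ is a graded derivation of the bracket [·•·]_Δ: for all homogeneous a, b ∈ A, δ[a•b]_Δ = [δa•b]_Δ - (-1)^{|a|} [a•δb]_Δ. -/
/-! With `ε = (-1)^|a|`, the bracket is `ε (Δ(ab) - (Δa) b) - a Δb`. Applying `δ`, moving it past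
`Δ` by `δΔ = -Δδ` and through products by the Leibniz rule at `a` (sign `ε`) and at `Δa`
(sign `-ε`, as `Δa` has degree `|a| - 1`), both sides expand to the same combination of
`Δ(δa · b)`, `Δ(a · δb)`, `(Δδa) b`, `(Δa) δb`, `δa · Δb` and `a · Δδb`. -/

section
variable {k A : Type*} [CommRing k] [Ring A] [Algebra k A]

theorem gbvBracket_eq_smul_sub_mul (Δ : A →ₗ[k] A) (m : ℤ) (a b : A) :
    gbvBracket Δ m a b = (m.negOnePow : ℤ) • (Δ (a * b) - Δ a * b) - a * Δ b := by
  rw [gbvBracket, smul_sub _ (_ - _), smul_smul, ← Units.val_mul, Int.units_mul_self,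
    Units.val_one, one_smul]

theorem map_gbvBracket_of_leibniz (Δ δ : A →ₗ[k] A) (hδΔ : ∀ x, δ (Δ x) = -Δ (δ x))
    (m : ℤ) (a b : A)
    (ha : ∀ c, δ (a * c) = δ a * c + (m.negOnePow : ℤ) • (a * δ c))
    (hΔa : ∀ c, δ (Δ a * c) = δ (Δ a) * c - (m.negOnePow : ℤ) • (Δ a * δ c)) :
    δ (gbvBracket Δ m a b)
      = gbvBracket Δ (m + 1) (δ a) b - (m.negOnePow : ℤ) • gbvBracket Δ m a (δ b) := by
  simp only [gbvBracket_eq_smul_sub_mul, Int.negOnePow_succ, Units.val_neg, map_sub, map_add,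
    map_zsmul, ha, hΔa, hδΔ, neg_mul, mul_neg]
  module

end

theorem differential_derivation_of_gbvBracket_general {k A : Type*} [CommRing k]
    [Ring A] [Algebra k A]
    (𝒜 : ℤ → Submodule k A)
    (Δ : A →ₗ[k] A)
    (hΔdeg : ∀ (n : ℤ) (a : A), a ∈ 𝒜 n → Δ a ∈ 𝒜 (n - 1))
    (δ : A →ₗ[k] A)
    (hδLeib : ∀ (m : ℤ) (a b : A), a ∈ 𝒜 m →
      δ (a * b) = δ a * b + (Int.negOnePow m : ℤ) • (a * δ b))
    (hanticomm : ∀ a : A, δ (Δ a) + Δ (δ a) = 0)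
    (m n : ℤ) (a b : A) (ha : a ∈ 𝒜 m) :
    δ (gbvBracket Δ m a b)
      = gbvBracket Δ (m + 1) (δ a) b
        - (Int.negOnePow m : ℤ) • gbvBracket Δ m a (δ b) := by
  refine map_gbvBracket_of_leibniz Δ δ (fun x => eq_neg_of_add_eq_zero_left (hanticomm x)) m a b
    (hδLeib m a · ha) fun c => ?_
  rw [hδLeib (m - 1) (Δ a) c (hΔdeg m a ha), Int.negOnePow_sub, Int.negOnePow_one, mul_neg_one,
    Units.val_neg, neg_smul, sub_eq_add_neg]

/-- let `A` be a ℤ-graded commutative `k`-algebra, `Δ` a `k`-linear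
map of degree `-1`, and `δ` a `k`-linear map of degree `+1` which is a graded
derivation of the product and satisfies `δΔ + Δδ = 0`.  Then `δ` is a graded
derivation of the bracket `[·•·]_Δ`: for homogeneous `a, b`,
`δ[a•b]_Δ = [δa•b]_Δ - (-1)^{|a|} [a•δb]_Δ`. -/
theorem differential_derivation_of_gbvBracket {k A : Type*} [CommRing k]
    [Ring A] [Algebra k A]
    (𝒜 : ℤ → Submodule k A) [GradedAlgebra 𝒜]
    (hcomm : ∀ (m n : ℤ) (a b : A), a ∈ 𝒜 m → b ∈ 𝒜 n →
      a * b = (Int.negOnePow (m * n) : ℤ) • (b * a))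
    (Δ : A →ₗ[k] A)
    (hΔdeg : ∀ (n : ℤ) (a : A), a ∈ 𝒜 n → Δ a ∈ 𝒜 (n - 1))
    (δ : A →ₗ[k] A)
    (hδdeg : ∀ (n : ℤ) (a : A), a ∈ 𝒜 n → δ a ∈ 𝒜 (n + 1))
    (hδLeib : ∀ (m : ℤ) (a b : A), a ∈ 𝒜 m →
      δ (a * b) = δ a * b + (Int.negOnePow m : ℤ) • (a * δ b))
    (hanticomm : ∀ a : A, δ (Δ a) + Δ (δ a) = 0)
    (m n : ℤ) (a b : A) (ha : a ∈ 𝒜 m) (hb : b ∈ 𝒜 n) :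
    δ (gbvBracket Δ m a b)
      = gbvBracket Δ (m + 1) (δ a) b
        - (Int.negOnePow m : ℤ) • gbvBracket Δ m a (δ b) :=
  differential_derivation_of_gbvBracket_general 𝒜 Δ hΔdeg δ hδLeib hanticomm m n a b ha
end

section
/- Let k be a commutative ℚ-algebra, let (L, [·,·], δ) be a differential graded Lie algebra over k, and let ω₁, ω₂, …, ω_n ∈ L₁ be elements of degree 1 satisfying δω₁ = 0 and δω_k = -(1/2) Σ_{p+q=k, p,q≥1} [ω_p, ω_q] for all 2 ≤ k ≤ n. Then δ( Σ_{p+q=n+1, p,q≥1} [ω_p, ω_q] ) = 0. (This is the inductive step allowing the order-(n+1) term of a formal power series solution of the Maurer–Cartan equation to be constructed from the lower-order terms.) -/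
/-!
Applying `δ` to `∑ [ω p, ω q]`, the Leibniz rule and graded antisymmetry give
`-2 ∑ [ω p, δ (ω (n + 1 - p))]`. Substituting the Maurer–Cartan relations (valid for `δ (ω 1)`
too, since its bracket sum is empty) turns this into the sum of `[ω i, [ω j, ω l]]` over positive
`i + j + l = n + 1`. That sum is invariant under permuting `(i, j, l)`, and by the Jacobi identity
for odd elements three permuted copies of it add up to zero, so it vanishes over `ℚ`.
-/

open Finset

theorem Finset.sum_Ico_one_sub_swap {M : Type*} [AddCommMonoid M] (f : ℕ → ℕ → M) (N : ℕ) :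
    ∑ p ∈ Ico 1 N, f p (N - p) = ∑ p ∈ Ico 1 N, f (N - p) p := by
  refine sum_nbij' (N - ·) (N - ·) ?_ ?_ ?_ ?_ ?_ <;> intro p hp <;> rw [mem_Ico] at hp
  · rw [mem_Ico]; omega
  · rw [mem_Ico]; omega
  · omega
  · omega
  · rw [Nat.sub_sub_self hp.2.le]

def posTriples (N : ℕ) : Finset (ℕ × ℕ × ℕ) :=
  (Ico 1 N ×ˢ Ico 1 N ×ˢ Ico 1 N).filter fun x => x.1 + x.2.1 + x.2.2 = N

theorem mem_posTriples {N : ℕ} {x : ℕ × ℕ × ℕ} :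
    x ∈ posTriples N ↔ 1 ≤ x.1 ∧ 1 ≤ x.2.1 ∧ 1 ≤ x.2.2 ∧ x.1 + x.2.1 + x.2.2 = N := by
  simp only [posTriples, mem_filter, mem_product, mem_Ico]
  omega

theorem sum_Ico_sum_Ico_eq_sum_posTriples {M : Type*} [AddCommMonoid M] (f : ℕ → ℕ → ℕ → M)
    (N : ℕ) :
    ∑ p ∈ Ico 1 N, ∑ a ∈ Ico 1 (N - p), f p a (N - p - a) =
      ∑ x ∈ posTriples N, f x.1 x.2.1 x.2.2 := by
  rw [sum_sigma']
  refine sum_nbij' (fun x => (x.1, x.2, N - x.1 - x.2)) (fun x => ⟨x.1, x.2.1⟩)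
    ?_ ?_ ?_ ?_ ?_
  · rintro ⟨p, a⟩ h
    simp only [mem_sigma, mem_Ico] at h
    simp only [mem_posTriples]; omega
  · intro x h
    rw [mem_posTriples] at h
    simp only [mem_sigma, mem_Ico]; omega
  · exact fun _ _ => rfl
  · intro x h
    rw [mem_posTriples] at h
    exact Prod.ext rfl (Prod.ext rfl (by dsimp only; omega))
  · exact fun _ _ => rfl

theorem sum_posTriples_eq_zero {M : Type*} [AddCommGroup M] [Module ℚ M] (T : ℕ → ℕ → ℕ → M)
    (hT : ∀ i j l, T i j l + T l i j + T j i l = 0) (N : ℕ) :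
    ∑ x ∈ posTriples N, T x.1 x.2.1 x.2.2 = 0 := by
  set S := ∑ x ∈ posTriples N, T x.1 x.2.1 x.2.2
  have rotate : ∑ x ∈ posTriples N, T x.2.2 x.1 x.2.1 = S :=
    sum_nbij' (fun x => (x.2.2, x.1, x.2.1)) (fun x => (x.2.1, x.2.2, x.1))
      (by intro x hx; simp only [mem_posTriples] at *; omega)
      (by intro x hx; simp only [mem_posTriples] at *; omega)
      (fun _ _ => rfl) (fun _ _ => rfl) (fun _ _ => rfl)
  have swap : ∑ x ∈ posTriples N, T x.2.1 x.1 x.2.2 = S :=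
    sum_nbij' (fun x => (x.2.1, x.1, x.2.2)) (fun x => (x.2.1, x.1, x.2.2))
      (by intro x hx; simp only [mem_posTriples] at *; omega)
      (by intro x hx; simp only [mem_posTriples] at *; omega)
      (fun _ _ => rfl) (fun _ _ => rfl) (fun _ _ => rfl)
  have : (3 : ℚ) • S = 0 := by
    calc (3 : ℚ) • S = S + S + S := by
          rw [show (3 : ℚ) = 1 + 1 + 1 by norm_num, add_smul, add_smul, one_smul]
      _ = ∑ x ∈ posTriples N, (T x.1 x.2.1 x.2.2 + T x.2.2 x.1 x.2.1 + T x.2.1 x.1 x.2.2) := by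
        rw [sum_add_distrib, sum_add_distrib, rotate, swap]
      _ = 0 := sum_eq_zero fun x _ => hT _ _ _
  exact (smul_eq_zero.mp this).resolve_left (by norm_num)

section DGLA

variable {k L : Type*} [CommRing k] [AddCommGroup L] [Module k L] {𝒜 : ℤ → Submodule k L}
  {br : L →ₗ[k] L →ₗ[k] L}

/-- The coefficient of `t ^ N` in `[ω, ω]` for the formal series `ω = ∑ ω i * t ^ i`
(the coefficient `ω 0` does not enter). -/
def selfBracketCoeff (br : L →ₗ[k] L →ₗ[k] L) (ω : ℕ → L) (N : ℕ) : L :=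
  ∑ p ∈ Ico 1 N, br (ω p) (ω (N - p))

theorem selfBracketCoeff_one (br : L →ₗ[k] L →ₗ[k] L) (ω : ℕ → L) :
    selfBracketCoeff br ω 1 = 0 := by
  simp [selfBracketCoeff]

theorem bracket_comm_of_mem_two_of_mem_one
    (hanti : ∀ (m n : ℤ) (x y : L), x ∈ 𝒜 m → y ∈ 𝒜 n →
      br x y = -((Int.negOnePow (m * n) : ℤ) • br y x))
    {x y : L} (hx : x ∈ 𝒜 2) (hy : y ∈ 𝒜 1) : br x y = -br y x := by
  have h := hanti 2 1 x y hx hy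
  rwa [show ((Int.negOnePow (2 * 1) : ℤˣ) : ℤ) = 1 by decide, one_smul] at h

theorem jacobi_cyclic_of_mem_one
    (hdeg : ∀ (m n : ℤ) (x y : L), x ∈ 𝒜 m → y ∈ 𝒜 n → br x y ∈ 𝒜 (m + n))
    (hanti : ∀ (m n : ℤ) (x y : L), x ∈ 𝒜 m → y ∈ 𝒜 n →
      br x y = -((Int.negOnePow (m * n) : ℤ) • br y x))
    (hjac : ∀ (m n p : ℤ) (x y z : L), x ∈ 𝒜 m → y ∈ 𝒜 n → z ∈ 𝒜 p →
      br x (br y z) = br (br x y) z + (Int.negOnePow (m * n) : ℤ) • br y (br x z))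
    {x y z : L} (hx : x ∈ 𝒜 1) (hy : y ∈ 𝒜 1) (hz : z ∈ 𝒜 1) :
    br x (br y z) + br z (br x y) + br y (br x z) = 0 := by
  have hxy : br (br x y) z = -br z (br x y) :=
    bracket_comm_of_mem_two_of_mem_one hanti (hdeg 1 1 x y hx hy) hz
  have := hjac 1 1 1 x y z hx hy hz
  simp only [hxy, mul_one, Int.negOnePow_one, Units.val_neg, Units.val_one, neg_smul, one_smul]
    at this
  rw [this]
  abel

theorem map_bracket_of_mem_one {δ : L →ₗ[k] L}
    (hδder : ∀ (m n : ℤ) (x y : L), x ∈ 𝒜 m → y ∈ 𝒜 n →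
      δ (br x y) = br (δ x) y + (Int.negOnePow m : ℤ) • br x (δ y))
    {x y : L} (hx : x ∈ 𝒜 1) (hy : y ∈ 𝒜 1) : δ (br x y) = br (δ x) y - br x (δ y) := by
  simpa [sub_eq_add_neg] using hδder 1 1 x y hx hy

theorem map_selfBracketCoeff {δ : L →ₗ[k] L}
    (hanti : ∀ (m n : ℤ) (x y : L), x ∈ 𝒜 m → y ∈ 𝒜 n →
      br x y = -((Int.negOnePow (m * n) : ℤ) • br y x))
    (hδdeg : ∀ (m : ℤ) (x : L), x ∈ 𝒜 m → δ x ∈ 𝒜 (m + 1))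
    (hδder : ∀ (m n : ℤ) (x y : L), x ∈ 𝒜 m → y ∈ 𝒜 n →
      δ (br x y) = br (δ x) y + (Int.negOnePow m : ℤ) • br x (δ y))
    {ω : ℕ → L} (hω : ∀ i, ω i ∈ 𝒜 1) (N : ℕ) :
    δ (selfBracketCoeff br ω N) = -(2 • ∑ p ∈ Ico 1 N, br (ω p) (δ (ω (N - p)))) := by
  have hδω (i : ℕ) : δ (ω i) ∈ 𝒜 2 := by simpa using hδdeg 1 (ω i) (hω i)
  have reflect : ∑ p ∈ Ico 1 N, br (δ (ω p)) (ω (N - p)) =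
      -∑ p ∈ Ico 1 N, br (ω p) (δ (ω (N - p))) := by
    rw [sum_Ico_one_sub_swap (fun p q => br (δ (ω p)) (ω q)), ← sum_neg_distrib]
    exact sum_congr rfl fun p _ => bracket_comm_of_mem_two_of_mem_one hanti (hδω _) (hω p)
  simp only [selfBracketCoeff, map_sum, map_bracket_of_mem_one hδder (hω _) (hω _),
    sum_sub_distrib, reflect]
  abel

theorem sum_bracket_selfBracketCoeff_eq_zero [Module ℚ L]
    (hdeg : ∀ (m n : ℤ) (x y : L), x ∈ 𝒜 m → y ∈ 𝒜 n → br x y ∈ 𝒜 (m + n))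
    (hanti : ∀ (m n : ℤ) (x y : L), x ∈ 𝒜 m → y ∈ 𝒜 n →
      br x y = -((Int.negOnePow (m * n) : ℤ) • br y x))
    (hjac : ∀ (m n p : ℤ) (x y z : L), x ∈ 𝒜 m → y ∈ 𝒜 n → z ∈ 𝒜 p →
      br x (br y z) = br (br x y) z + (Int.negOnePow (m * n) : ℤ) • br y (br x z))
    {ω : ℕ → L} (hω : ∀ i, ω i ∈ 𝒜 1) (N : ℕ) :
    ∑ p ∈ Ico 1 N, br (ω p) (selfBracketCoeff br ω (N - p)) = 0 := by
  simp only [selfBracketCoeff, map_sum]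
  rw [sum_Ico_sum_Ico_eq_sum_posTriples fun i j l => br (ω i) (br (ω j) (ω l))]
  exact sum_posTriples_eq_zero (fun i j l => br (ω i) (br (ω j) (ω l)))
    (fun i j l => jacobi_cyclic_of_mem_one hdeg hanti hjac (hω i) (hω j) (hω l)) N

end DGLA

theorem maurer_cartan_inductive_step_general {k L : Type*} [CommRing k]
    [AddCommGroup L] [Module k L] [Module ℚ L]
    (𝒜 : ℤ → Submodule k L)
    (br : L →ₗ[k] L →ₗ[k] L)
    (hdeg : ∀ (m n : ℤ) (x y : L), x ∈ 𝒜 m → y ∈ 𝒜 n → br x y ∈ 𝒜 (m + n))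
    (hanti : ∀ (m n : ℤ) (x y : L), x ∈ 𝒜 m → y ∈ 𝒜 n →
      br x y = -((Int.negOnePow (m * n) : ℤ) • br y x))
    (hjac : ∀ (m n p : ℤ) (x y z : L), x ∈ 𝒜 m → y ∈ 𝒜 n → z ∈ 𝒜 p →
      br x (br y z) = br (br x y) z + (Int.negOnePow (m * n) : ℤ) • br y (br x z))
    (δ : L →ₗ[k] L)
    (hδdeg : ∀ (m : ℤ) (x : L), x ∈ 𝒜 m → δ x ∈ 𝒜 (m + 1))
    (hδder : ∀ (m n : ℤ) (x y : L), x ∈ 𝒜 m → y ∈ 𝒜 n →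
      δ (br x y) = br (δ x) y + (Int.negOnePow m : ℤ) • br x (δ y))
    (n : ℕ) (ω : ℕ → L)
    (hωdeg : ∀ i, ω i ∈ 𝒜 1)
    (hω1 : δ (ω 1) = 0)
    (hωk : ∀ j, 2 ≤ j → j ≤ n →
      δ (ω j) = -((1/2 : ℚ) • ∑ p ∈ Finset.Ico 1 j, br (ω p) (ω (j - p)))) :
    δ (∑ p ∈ Finset.Ico 1 (n + 1), br (ω p) (ω (n + 1 - p))) = 0 := by
  have hδω (j : ℕ) (hj : j ∈ Ico 1 (n + 1)) :
      δ (ω j) = -((1/2 : ℚ) • selfBracketCoeff br ω j) := by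
    rw [mem_Ico] at hj
    obtain rfl | hj2 := eq_or_lt_of_le hj.1
    · rw [hω1, selfBracketCoeff_one, smul_zero, neg_zero]
    · exact hωk j hj2 (by omega)
  have hsum : ∑ p ∈ Ico 1 (n + 1), br (ω p) (δ (ω (n + 1 - p))) =
      -((1/2 : ℚ) • ∑ p ∈ Ico 1 (n + 1), br (ω p) (selfBracketCoeff br ω (n + 1 - p))) := by
    rw [smul_sum, ← sum_neg_distrib]
    refine sum_congr rfl fun p hp => ?_
    rw [hδω _ (by rw [mem_Ico] at hp ⊢; omega), map_neg, map_rat_smul]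
  change δ (selfBracketCoeff br ω (n + 1)) = 0
  rw [map_selfBracketCoeff hanti hδdeg hδder hωdeg, hsum,
    sum_bracket_selfBracketCoeff_eq_zero hdeg hanti hjac hωdeg]
  simp

/-- let `(L, [·,·], δ)` be a differential graded Lie algebra over a
commutative ℚ-algebra `k`, and let `ω₁, …, ω_n` be degree-1 elements with
`δω₁ = 0` and `δω_k = -(1/2) Σ_{p+q=k, p,q ≥ 1} [ω_p, ω_q]` for `2 ≤ k ≤ n`.
Then `δ(Σ_{p+q=n+1, p,q ≥ 1} [ω_p, ω_q]) = 0`: this is the inductive step in the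
construction of a formal power series solution of the Maurer–Cartan equation. -/
theorem maurer_cartan_inductive_step {k L : Type*} [CommRing k] [Algebra ℚ k]
    [AddCommGroup L] [Module k L] [Module ℚ L] [IsScalarTower ℚ k L]
    (𝒜 : ℤ → Submodule k L) [DirectSum.Decomposition 𝒜]
    (br : L →ₗ[k] L →ₗ[k] L)
    (hdeg : ∀ (m n : ℤ) (x y : L), x ∈ 𝒜 m → y ∈ 𝒜 n → br x y ∈ 𝒜 (m + n))
    (hanti : ∀ (m n : ℤ) (x y : L), x ∈ 𝒜 m → y ∈ 𝒜 n →
      br x y = -((Int.negOnePow (m * n) : ℤ) • br y x))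
    (hjac : ∀ (m n p : ℤ) (x y z : L), x ∈ 𝒜 m → y ∈ 𝒜 n → z ∈ 𝒜 p →
      br x (br y z) = br (br x y) z + (Int.negOnePow (m * n) : ℤ) • br y (br x z))
    (δ : L →ₗ[k] L)
    (hδdeg : ∀ (m : ℤ) (x : L), x ∈ 𝒜 m → δ x ∈ 𝒜 (m + 1))
    (hδ2 : ∀ x : L, δ (δ x) = 0)
    (hδder : ∀ (m n : ℤ) (x y : L), x ∈ 𝒜 m → y ∈ 𝒜 n →
      δ (br x y) = br (δ x) y + (Int.negOnePow m : ℤ) • br x (δ y))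
    (n : ℕ) (hn : 1 ≤ n) (ω : ℕ → L)
    (hωdeg : ∀ i, ω i ∈ 𝒜 1)
    (hω1 : δ (ω 1) = 0)
    (hωk : ∀ j, 2 ≤ j → j ≤ n →
      δ (ω j) = -((1/2 : ℚ) • ∑ p ∈ Finset.Ico 1 j, br (ω p) (ω (j - p)))) :
    δ (∑ p ∈ Finset.Ico 1 (n + 1), br (ω p) (ω (n + 1 - p))) = 0 :=
  maurer_cartan_inductive_step_general 𝒜 br hdeg hanti hjac δ hδdeg hδder n ω hωdeg hω1 hωk
end
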